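/- Assume Hypotheses 4.1 and additionally n > 2λ+2, and let E := {[a,b] : a,b ∈ Ω, a ≠ b}. Then the number of distinct elementary moves is |E| = n(n−1)/(2(λ+1)). -/

import Mathlib

open Equiv

variable {Ω : Type*}

/-- `(Ω, B)` is a `2-(n,4,lam)` design: `Ω` has `n` points, every line has 4 points,
and every 2-element subset of `Ω` is contained in exactly `lam` lines. -/
def IsDesign [Fintype Ω] (B : Set (Finset Ω)) (n lam : ℕ) : Prop :=
  Fintype.card Ω = n ∧
  (∀ L ∈ B, L.card = 4) ∧
  (∀ p : Finset Ω, p.card = 2 → {L ∈ B | p ⊆ L}.ncard = lam)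

/-- A design is supersimple if any two distinct lines intersect in at most two points. -/
def Supersimple [DecidableEq Ω] (B : Set (Finset Ω)) : Prop :=
  ∀ L₁ ∈ B, ∀ L₂ ∈ B, L₁ ≠ L₂ → (L₁ ∩ L₂).card ≤ 2

/-- Condition (△): the symmetric difference of two lines meeting in two points is a line. -/
def SymmDiffCond [DecidableEq Ω] (B : Set (Finset Ω)) : Prop :=
  ∀ L₁ ∈ B, ∀ L₂ ∈ B, (L₁ ∩ L₂).card = 2 → symmDiff L₁ L₂ ∈ B

/-- The collinear triples: 3-element subsets contained in some line. -/
def collinearTriples (B : Set (Finset Ω)) : Set (Finset Ω) :=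
  { t | t.card = 3 ∧ ∃ L ∈ B, t ⊆ L }

/-- `(Ω, C)` is a regular two-graph: `C` is a set of 3-element subsets, every 2-element
subset lies in exactly `μ` members of `C` for a constant `μ`, and every 4-element subset
contains exactly 0, 2 or 4 members of `C`. -/
def IsRegularTwoGraph (C : Set (Finset Ω)) : Prop :=
  (∀ t ∈ C, t.card = 3) ∧
  (∃ μ : ℕ, ∀ p : Finset Ω, p.card = 2 → {t ∈ C | p ⊆ t}.ncard = μ) ∧
  (∀ q : Finset Ω, q.card = 4 →
    {t ∈ C | t ⊆ q}.ncard = 0 ∨ {t ∈ C | t ⊆ q}.ncard = 2 ∨ {t ∈ C | t ⊆ q}.ncard = 4)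

/-- `mv a b` is the elementary move `[a,b]`: it is the identity when `a = b`; when `a ≠ b`
it interchanges `a` and `b`, interchanges `x` and `y` whenever `{a,b,x,y}` is a line, and
fixes every point not collinear with `a, b`. -/
def IsElemMoveFn [DecidableEq Ω] (B : Set (Finset Ω)) (mv : Ω → Ω → Equiv.Perm Ω) : Prop :=
  (∀ a, mv a a = 1) ∧
  ∀ a b : Ω, a ≠ b →
    mv a b a = b ∧ mv a b b = a ∧
    (∀ x y : Ω, ({a, b, x, y} : Finset Ω) ∈ B → mv a b x = y) ∧
    (∀ x : Ω, x ≠ a → x ≠ b → (∀ L ∈ B, ¬(a ∈ L ∧ b ∈ L ∧ x ∈ L)) → mv a b x = x)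

/-- The move sequence `[a, b₁, …, b_k] = [a,b₁][b₁,b₂]⋯[b_{k-1},b_k]`; the factors are
applied left-to-right (so in Lean's convention the product is reversed). -/
def moveSeq (mv : Ω → Ω → Equiv.Perm Ω) : Ω → List Ω → Equiv.Perm Ω
  | _, [] => 1
  | a, b :: l => moveSeq mv b l * mv a b

/-- The Conway groupoid `L_x(D)`: all move sequences starting at `x`. -/
def ConwayGroupoid (mv : Ω → Ω → Equiv.Perm Ω) (x : Ω) : Set (Equiv.Perm Ω) :=
  { g | ∃ l : List Ω, g = moveSeq mv x l }

/-- The hole stabilizer `π_x(D)`: all move sequences starting and ending at `x`. -/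
def holeStabilizer (mv : Ω → Ω → Equiv.Perm Ω) (x : Ω) : Set (Equiv.Perm Ω) :=
  { g | ∃ l : List Ω, g = moveSeq mv x (l ++ [x]) }

/-- `L(D)`: the set of all move sequences. -/
def allMoveSeqs (mv : Ω → Ω → Equiv.Perm Ω) : Set (Equiv.Perm Ω) :=
  { g | ∃ (a : Ω) (l : List Ω), g = moveSeq mv a l }

/-- The set `E` of elementary moves `[a,b]` with `a ≠ b`. -/
def elemMoves (mv : Ω → Ω → Equiv.Perm Ω) : Set (Equiv.Perm Ω) :=
  { g | ∃ a b : Ω, a ≠ b ∧ g = mv a b }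

/-- `\overline{x,y}`: the set of points lying on a common line with `x` and `y`. -/
def lineJoin (B : Set (Finset Ω)) (x y : Ω) : Set Ω :=
  { z | ∃ L ∈ B, x ∈ L ∧ y ∈ L ∧ z ∈ L }

/-- A set `G` of permutations is transitive on `S`. -/
def SetTransitiveOn (G : Set (Equiv.Perm Ω)) (S : Set Ω) : Prop :=
  ∀ x ∈ S, ∀ y ∈ S, ∃ g ∈ G, g x = y

/-- `Δ` is a block for the set `G` of permutations. -/
def SetIsBlock (G : Set (Equiv.Perm Ω)) (Δ : Set Ω) : Prop :=
  ∀ g ∈ G, (⇑g) '' Δ = Δ ∨ Disjoint ((⇑g) '' Δ) Δ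

/-- A set `G` of permutations is primitive on `S`: it is transitive on `S` and every
block contained in `S` is trivial (equivalently, the only invariant partitions are the
partition into singletons and the one-part partition). -/
def SetPrimitiveOn (G : Set (Equiv.Perm Ω)) (S : Set Ω) : Prop :=
  SetTransitiveOn G S ∧
  ∀ Δ : Set Ω, Δ ⊆ S → SetIsBlock G Δ → Δ.Subsingleton ∨ Δ = S

/-- Primitivity on all of `Ω`. -/
def SetPrimitive (G : Set (Equiv.Perm Ω)) : Prop :=
  SetPrimitiveOn G Set.univ

/-- `(G, E)` is a 3-transposition group: `G` is the group generated by `E`, `E` is a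
union of `G`-conjugacy classes of involutions, and any product of two members of `E`
has order 1, 2 or 3. -/
def Is3TranspositionGroup (G E : Set (Equiv.Perm Ω)) : Prop :=
  ((Subgroup.closure E : Subgroup (Equiv.Perm Ω)) : Set (Equiv.Perm Ω)) = G ∧
  (∀ e ∈ E, orderOf e = 2) ∧
  (∀ g ∈ G, ∀ e ∈ E, g * e * g⁻¹ ∈ E) ∧
  (∀ g ∈ E, ∀ h ∈ E, orderOf (g * h) = 1 ∨ orderOf (g * h) = 2 ∨ orderOf (g * h) = 3)

/-- Two designs are isomorphic: a bijection of the point sets carrying lines to lines. -/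
def DesignIso {Ω₁ Ω₂ : Type*} (B₁ : Set (Finset Ω₁)) (B₂ : Set (Finset Ω₂)) : Prop :=
  ∃ e : Ω₁ ≃ Ω₂, ∀ L : Finset Ω₁, L ∈ B₁ ↔ L.map e.toEmbedding ∈ B₂

/-- The lines of the Boolean quadruple system of order `2^m`: 4-subsets of `F_2^m`
summing to zero. -/
def booleanLines (m : ℕ) : Set (Finset (Fin m → ZMod 2)) :=
  { L | L.card = 4 ∧ ∑ v ∈ L, v = 0 }

/-- `V = F_2^{2m}`, with coordinates indexed by `Fin m ⊕ Fin m`. -/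
abbrev Vsp (m : ℕ) := (Fin m ⊕ Fin m) → ZMod 2

/-- `θ(u) = u e uᵀ` where `e` is the block matrix `(0 I; 0 0)`. -/
def theta {m : ℕ} (u : Vsp m) : ZMod 2 :=
  ∑ i : Fin m, u (Sum.inl i) * u (Sum.inr i)

/-- The lines of the design `D^a`: 4-subsets of `V` summing to zero on which `θ` sums
to zero. -/
def linesA (m : ℕ) : Set (Finset (Vsp m)) :=
  { L | L.card = 4 ∧ ∑ v ∈ L, v = 0 ∧ ∑ v ∈ L, theta v = 0 }

/-- The lines of the design `D^ε`: 4-subsets of `{v ∈ V : θ(v) = ε}` summing to zero. -/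
def linesEps (m : ℕ) (ε : ZMod 2) : Set (Finset {v : Vsp m // theta v = ε}) :=
  { L | L.card = 4 ∧ ∑ v ∈ L, (v : Vsp m) = 0 }

/-- The derived graph `G_{D,∞}`: vertices are the points other than `∞`, with `a, b`
adjacent iff `{∞,a,b}` is a collinear triple. -/
def derivedGraph [DecidableEq Ω] (B : Set (Finset Ω)) (inf : Ω) :
    SimpleGraph {x : Ω // x ≠ inf} where
  Adj a b := a ≠ b ∧ ({inf, (a : Ω), (b : Ω)} : Finset Ω) ∈ collinearTriples B
  symm := by
    constructor
    rintro a b ⟨hab, h⟩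
    exact ⟨hab.symm, by rwa [Finset.pair_comm (b : Ω) (a : Ω)]⟩
  loopless := by constructor; rintro a ⟨h, -⟩; exact h rfl

/-- `w` witnesses the triangle property for the edge `{u,v}`: `w` is a common neighbour
of `u` and `v`, and every other vertex is adjacent to exactly one or three of `u,v,w`. -/
def TriangleWitness {V : Type*} (G : SimpleGraph V) (u v w : V) : Prop :=
  G.Adj u w ∧ G.Adj v w ∧
  ∀ x : V, x ∉ ({u, v, w} : Set V) →
    ({y ∈ ({u, v, w} : Set V) | G.Adj x y}.ncard = 1 ∨
     {y ∈ ({u, v, w} : Set V) | G.Adj x y}.ncard = 3)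

/-- The triangle property for a graph. -/
def HasTriangleProperty {V : Type*} (G : SimpleGraph V) : Prop :=
  (∃ u v, G.Adj u v) ∧ ∀ u v : V, G.Adj u v → ∃ w, TriangleWitness G u v w

/-- The strong triangle property: each edge has a unique triangle-property witness. -/
def HasStrongTriangleProperty {V : Type*} (G : SimpleGraph V) : Prop :=
  (∃ u v, G.Adj u v) ∧ ∀ u v : V, G.Adj u v → ∃! w, TriangleWitness G u v w

/-- A coherent 4-subset: all four of its 3-element subsets lie in `C`. -/
def IsCoherent (C : Set (Finset Ω)) (q : Finset Ω) : Prop :=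
  q.card = 4 ∧ ∀ t ⊆ q, t.card = 3 → t ∈ C

/-!
Count the ordered pairs `(a, b)` of distinct points by the move `[a,b]` they produce. For
`a ≠ b`, `[c,d] = [a,b]` exactly when `(c, d)` is `(a, b)`, `(b, a)`, or an ordering of the two
remaining points of one of the `λ` lines through `a` and `b`. One direction holds because
`[a,b]` moves `c ∉ {a, b}` only along a line through `a, b, c`; for the other, if `{a, b, x, y}`
and `{a, b, p, q}` are lines then, by supersimplicity and (△), so is `{x, y, p, q}`, whence
`[x,y]` and `[a,b]` agree at `p`. Each move thus comes from exactly `2(λ + 1)` of the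
`n(n - 1)` ordered pairs.
-/

namespace Finset

variable {α : Type*} [DecidableEq α] {s : Finset α} {a b c d : α}

theorem exists_mem_ne_of_three_lt_card (hs : 3 < #s) (a b c : α) :
    ∃ d ∈ s, d ≠ a ∧ d ≠ b ∧ d ≠ c := by
  obtain ⟨d, hd, hdabc⟩ :=
    exists_mem_notMem_of_card_lt_card (s := {a, b, c}) (card_le_three.trans_lt hs)
  simp only [mem_insert, mem_singleton, not_or] at hdabc
  exact ⟨d, hd, hdabc⟩

theorem eq_of_card_eq_four_of_mem (hs : #s = 4) (ha : a ∈ s) (hb : b ∈ s) (hc : c ∈ s)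
    (hd : d ∈ s) (hab : a ≠ b) (hac : a ≠ c) (had : a ≠ d) (hbc : b ≠ c) (hbd : b ≠ d)
    (hcd : c ≠ d) :
    s = {a, b, c, d} := by
  refine (eq_of_subset_of_card_le ?_ ?_).symm
  · simp [insert_subset_iff, *]
  · rw [hs, card_insert_of_notMem (by simp [*]), card_insert_of_notMem (by simp [*]),
      card_pair hcd]

end Finset

open Finset

theorem lineJoin_comm (B : Set (Finset Ω)) (a b : Ω) : lineJoin B a b = lineJoin B b a := by
  ext x
  exact exists_congr fun L => and_congr_right fun _ => and_left_comm

namespace Supersimple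

variable [DecidableEq Ω] {B : Set (Finset Ω)} {L M : Finset Ω} {a b c : Ω}

theorem eq_of_three_mem (hss : Supersimple B) (hL : L ∈ B) (hM : M ∈ B)
    (haL : a ∈ L) (hbL : b ∈ L) (hcL : c ∈ L) (haM : a ∈ M) (hbM : b ∈ M) (hcM : c ∈ M)
    (hab : a ≠ b) (hac : a ≠ c) (hbc : b ≠ c) : L = M := by
  by_contra hLM
  have h3 : #({a, b, c} : Finset Ω) ≤ #(L ∩ M) :=
    card_le_card (by simp [insert_subset_iff, *])
  rw [card_insert_of_notMem (by simp [*]), card_pair hbc] at h3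
  have := hss L hL M hM hLM
  omega

theorem symmDiff_mem (hss : Supersimple B) (hsd : SymmDiffCond B) (hL : L ∈ B) (hM : M ∈ B)
    (hLM : L ≠ M) (haL : a ∈ L) (hbL : b ∈ L) (haM : a ∈ M) (hbM : b ∈ M) (hab : a ≠ b) :
    symmDiff L M ∈ B := by
  refine hsd L hL M hM (le_antisymm (hss L hL M hM hLM) ?_)
  rw [← card_pair hab]
  exact card_le_card (by simp [insert_subset_iff, *])

end Supersimple

namespace IsElemMoveFn

variable [DecidableEq Ω] {B : Set (Finset Ω)} {mv : Ω → Ω → Perm Ω} {L : Finset Ω}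
  {a b x y : Ω}

theorem apply_left (hmv : IsElemMoveFn B mv) (hab : a ≠ b) : mv a b a = b :=
  (hmv.2 a b hab).1

theorem apply_right (hmv : IsElemMoveFn B mv) (hab : a ≠ b) : mv a b b = a :=
  (hmv.2 a b hab).2.1

theorem apply_of_notMem_lineJoin (hmv : IsElemMoveFn B mv) (hab : a ≠ b) (hxa : x ≠ a)
    (hxb : x ≠ b) (hx : x ∉ lineJoin B a b) : mv a b x = x :=
  (hmv.2 a b hab).2.2.2 x hxa hxb fun L hL h => hx ⟨L, hL, h⟩

variable (hB : ∀ L ∈ B, #L = 4)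
include hB

theorem apply_eq_of_mem_line (hmv : IsElemMoveFn B mv) (hL : L ∈ B)
    (ha : a ∈ L) (hb : b ∈ L) (hx : x ∈ L) (hy : y ∈ L)
    (hab : a ≠ b) (hax : a ≠ x) (hay : a ≠ y) (hbx : b ≠ x) (hby : b ≠ y) (hxy : x ≠ y) :
    mv a b x = y :=
  (hmv.2 a b hab).2.2.1 x y
    (eq_of_card_eq_four_of_mem (hB L hL) ha hb hx hy hab hax hay hbx hby hxy ▸ hL)

theorem apply_mem_line (hmv : IsElemMoveFn B mv) (hL : L ∈ B)
    (ha : a ∈ L) (hb : b ∈ L) (hx : x ∈ L) (hab : a ≠ b) (hax : a ≠ x) (hbx : b ≠ x) :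
    mv a b x ∈ L ∧ mv a b x ≠ a ∧ mv a b x ≠ b ∧ mv a b x ≠ x := by
  obtain ⟨y, hy, hya, hyb, hyx⟩ :=
    exists_mem_ne_of_three_lt_card (by rw [hB L hL]; norm_num) a b x
  rw [hmv.apply_eq_of_mem_line hB hL ha hb hx hy hab hax hya.symm hbx hyb.symm hyx.symm]
  exact ⟨hy, hya, hyb, hyx⟩

theorem comm (hmv : IsElemMoveFn B mv) (a b : Ω) : mv b a = mv a b := by
  obtain rfl | hab := eq_or_ne a b
  · rfl
  ext x
  obtain rfl | hxa := eq_or_ne x a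
  · rw [hmv.apply_right hab.symm, hmv.apply_left hab]
  obtain rfl | hxb := eq_or_ne x b
  · rw [hmv.apply_left hab.symm, hmv.apply_right hab]
  by_cases hx : x ∈ lineJoin B a b
  · obtain ⟨L, hL, haL, hbL, hxL⟩ := hx
    obtain ⟨hyL, hya, hyb, hyx⟩ :=
      hmv.apply_mem_line hB hL haL hbL hxL hab hxa.symm hxb.symm
    exact hmv.apply_eq_of_mem_line hB hL hbL haL hxL hyL hab.symm hxb.symm hyb.symm hxa.symm
      hya.symm hyx.symm
  · rw [hmv.apply_of_notMem_lineJoin hab.symm hxb hxa (lineJoin_comm B a b ▸ hx),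
      hmv.apply_of_notMem_lineJoin hab hxa hxb hx]

variable (hss : Supersimple B) (hsd : SymmDiffCond B)
include hss hsd

/-- If `M` is the line through `a, b, p`, then `L △ M` is a line through `x, y, p` whose fourth
point is `[a,b] p`. -/
theorem apply_eq_apply_of_mem_lineJoin (hmv : IsElemMoveFn B mv) (hL : L ∈ B)
    (haL : a ∈ L) (hbL : b ∈ L) (hxL : x ∈ L) (hyL : y ∈ L)
    (hab : a ≠ b) (hax : a ≠ x) (hay : a ≠ y) (hbx : b ≠ x) (hby : b ≠ y) (hxy : x ≠ y)
    {p : Ω} (hpL : p ∉ L) (hp : p ∈ lineJoin B a b) : mv x y p = mv a b p := by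
  obtain ⟨M, hM, haM, hbM, hpM⟩ := hp
  have hpa : a ≠ p := ne_of_mem_of_not_mem haL hpL
  have hpb : b ≠ p := ne_of_mem_of_not_mem hbL hpL
  obtain ⟨hqM, hqa, hqb, hqp⟩ := hmv.apply_mem_line hB hM haM hbM hpM hab hpa hpb
  have hLM : L ≠ M := fun h => hpL (h ▸ hpM)
  have hnotM : ∀ z ∈ L, a ≠ z → b ≠ z → z ∉ M := fun z hzL haz hbz hzM =>
    hLM (hss.eq_of_three_mem hL hM haL hbL hzL haM hbM hzM hab haz hbz)
  have hqL : mv a b p ∉ L := fun h => hnotM _ h hqa.symm hqb.symm hqM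
  have hN := hss.symmDiff_mem hsd hL hM hLM haL hbL haM hbM hab
  exact hmv.apply_eq_of_mem_line hB hN
    (mem_symmDiff.2 (Or.inl ⟨hxL, hnotM x hxL hax hbx⟩))
    (mem_symmDiff.2 (Or.inl ⟨hyL, hnotM y hyL hay hby⟩))
    (mem_symmDiff.2 (Or.inr ⟨hpM, hpL⟩)) (mem_symmDiff.2 (Or.inr ⟨hqM, hqL⟩))
    hxy (ne_of_mem_of_not_mem hxL hpL) (ne_of_mem_of_not_mem hxL hqL)
    (ne_of_mem_of_not_mem hyL hpL) (ne_of_mem_of_not_mem hyL hqL) hqp.symm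

theorem eq_of_mem_line (hmv : IsElemMoveFn B mv) (hL : L ∈ B)
    (haL : a ∈ L) (hbL : b ∈ L) (hxL : x ∈ L) (hyL : y ∈ L)
    (hab : a ≠ b) (hax : a ≠ x) (hay : a ≠ y) (hbx : b ≠ x) (hby : b ≠ y) (hxy : x ≠ y) :
    mv x y = mv a b := by
  ext p
  by_cases hpL : p ∈ L
  · rw [eq_of_card_eq_four_of_mem (hB L hL) haL hbL hxL hyL hab hax hay hbx hby hxy] at hpL
    simp only [mem_insert, mem_singleton] at hpL
    rcases hpL with rfl | rfl | rfl | rfl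
    · rw [hmv.apply_left hab,
        hmv.apply_eq_of_mem_line hB hL hxL hyL haL hbL hxy hax.symm hbx.symm hay.symm hby.symm hab]
    · rw [hmv.apply_right hab,
        hmv.apply_eq_of_mem_line hB hL hxL hyL hbL haL hxy hbx.symm hax.symm hby.symm hay.symm
          hab.symm]
    · rw [hmv.apply_left hxy,
        hmv.apply_eq_of_mem_line hB hL haL hbL hxL hyL hab hax hay hbx hby hxy]
    · rw [hmv.apply_right hxy,
        hmv.apply_eq_of_mem_line hB hL haL hbL hyL hxL hab hay hax hby hbx hxy.symm]
  by_cases hpab : p ∈ lineJoin B a b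
  · exact hmv.apply_eq_apply_of_mem_lineJoin hB hss hsd hL haL hbL hxL hyL hab hax hay hbx hby hxy
      hpL hpab
  by_cases hpxy : p ∈ lineJoin B x y
  · exact (hmv.apply_eq_apply_of_mem_lineJoin hB hss hsd hL hxL hyL haL hbL hxy hax.symm hbx.symm
      hay.symm hby.symm hab hpL hpxy).symm
  have hne : ∀ z ∈ L, p ≠ z := fun z hz h => hpL (h ▸ hz)
  rw [hmv.apply_of_notMem_lineJoin hxy (hne x hxL) (hne y hyL) hpxy,
    hmv.apply_of_notMem_lineJoin hab (hne a haL) (hne b hbL) hpab]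

end IsElemMoveFn

section Counting

variable [Fintype Ω] [DecidableEq Ω] {B : Set (Finset Ω)} {a b : Ω}

open Classical in
noncomputable def linesThrough (B : Set (Finset Ω)) (a b : Ω) : Finset (Finset Ω) :=
  {L | L ∈ B ∧ a ∈ L ∧ b ∈ L}

theorem mem_linesThrough {L : Finset Ω} :
    L ∈ linesThrough B a b ↔ L ∈ B ∧ a ∈ L ∧ b ∈ L := by
  simp [linesThrough]

theorem card_linesThrough {lam : ℕ}
    (hlam : ∀ p : Finset Ω, #p = 2 → {L ∈ B | p ⊆ L}.ncard = lam) (hab : a ≠ b) :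
    #(linesThrough B a b) = lam := by
  rw [← hlam {a, b} (card_pair hab), ← Set.ncard_coe_finset]
  congr 1
  ext L
  rw [mem_coe, mem_linesThrough, Set.mem_sep_iff, insert_subset_iff, singleton_subset_iff]

noncomputable def partnerPairs (B : Set (Finset Ω)) (a b : Ω) : Finset (Ω × Ω) :=
  {(a, b), (b, a)} ∪ (linesThrough B a b).biUnion fun L => (L \ {a, b}).offDiag

theorem card_partnerPairs {lam : ℕ} (hB : ∀ L ∈ B, #L = 4) (hss : Supersimple B)
    (hlam : ∀ p : Finset Ω, #p = 2 → {L ∈ B | p ⊆ L}.ncard = lam) (hab : a ≠ b) :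
    #(partnerPairs B a b) = 2 * (lam + 1) := by
  have hcompl : ∀ L ∈ linesThrough B a b, #(L \ {a, b}) = 2 := fun L hL => by
    obtain ⟨hLB, haL, hbL⟩ := mem_linesThrough.1 hL
    rw [card_sdiff_of_subset (by simp [insert_subset_iff, *]), hB L hLB, card_pair hab]
  have hdisj : (linesThrough B a b : Set (Finset Ω)).PairwiseDisjoint
      fun L => (L \ {a, b}).offDiag := by
    intro L hL M hM hLM
    obtain ⟨hLB, haL, hbL⟩ := mem_linesThrough.1 hL
    obtain ⟨hMB, haM, hbM⟩ := mem_linesThrough.1 hM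
    refine disjoint_left.2 fun q hqL hqM => hLM ?_
    simp only [mem_offDiag, mem_sdiff, mem_insert, mem_singleton, not_or] at hqL hqM
    exact hss.eq_of_three_mem hLB hMB haL hbL hqL.1.1 haM hbM hqM.1.1 hab
      (Ne.symm hqL.1.2.1) (Ne.symm hqL.1.2.2)
  have hsep : Disjoint {(a, b), (b, a)}
      ((linesThrough B a b).biUnion fun L => (L \ {a, b}).offDiag) := by
    refine disjoint_left.2 fun q hq hq' => ?_
    simp only [mem_biUnion, mem_offDiag, mem_sdiff, mem_insert, mem_singleton] at hq hq'
    obtain ⟨_, _, ⟨_, hq1⟩, _⟩ := hq'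
    rcases hq with rfl | rfl <;> simp at hq1
  rw [partnerPairs, card_union_of_disjoint hsep, card_pair (by simp [hab]), card_biUnion hdisj,
    sum_const_nat fun L hL => by rw [offDiag_card, hcompl L hL], card_linesThrough hlam hab]
  ring

theorem IsElemMoveFn.filter_offDiag_eq_partnerPairs {mv : Ω → Ω → Perm Ω}
    (hmv : IsElemMoveFn B mv) (hB : ∀ L ∈ B, #L = 4) (hss : Supersimple B)
    (hsd : SymmDiffCond B) (hab : a ≠ b) :
    {q ∈ (univ : Finset Ω).offDiag | mv q.1 q.2 = mv a b} = partnerPairs B a b := by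
  ext ⟨c, d⟩
  simp only [mem_filter, mem_offDiag, mem_univ, true_and, partnerPairs, mem_union, mem_insert,
    mem_singleton, Prod.mk.injEq, mem_biUnion, mem_sdiff, mem_linesThrough]
  constructor
  · rintro ⟨hcd, hmvcd⟩
    have hd : mv a b c = d := hmvcd ▸ hmv.apply_left hcd
    obtain rfl | hca := eq_or_ne c a
    · exact Or.inl (Or.inl ⟨rfl, hd ▸ hmv.apply_left hab⟩)
    obtain rfl | hcb := eq_or_ne c b
    · exact Or.inl (Or.inr ⟨rfl, hd ▸ hmv.apply_right hab⟩)
    have hc : c ∈ lineJoin B a b := by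
      by_contra hc
      exact hcd (hd ▸ (hmv.apply_of_notMem_lineJoin hab hca hcb hc).symm)
    obtain ⟨L, hL, haL, hbL, hcL⟩ := hc
    obtain ⟨hdL, hda, hdb, hdc⟩ :=
      hmv.apply_mem_line hB hL haL hbL hcL hab hca.symm hcb.symm
    rw [hd] at hdL hda hdb hdc
    exact Or.inr
      ⟨L, ⟨hL, haL, hbL⟩, ⟨⟨hcL, by simp [hca, hcb]⟩, ⟨hdL, by simp [hda, hdb]⟩, hcd⟩⟩
  · rintro ((⟨rfl, rfl⟩ | ⟨rfl, rfl⟩) | ⟨L, ⟨hL, haL, hbL⟩, ⟨hcL, hcab⟩, ⟨hdL, hdab⟩, hcd⟩)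
    · exact ⟨hab, rfl⟩
    · exact ⟨hab.symm, (hmv.comm hB c d).symm⟩
    · rw [not_or] at hcab hdab
      exact ⟨hcd, hmv.eq_of_mem_line hB hss hsd hL haL hbL hcL hdL hab (Ne.symm hcab.1)
        (Ne.symm hdab.1) (Ne.symm hcab.2) (Ne.symm hdab.2) hcd⟩

end Counting

theorem elemMoves_count_general [Fintype Ω] [DecidableEq Ω]
    {B : Set (Finset Ω)} {n lam : ℕ}
    (hD : IsDesign B n lam) (hss : Supersimple B) (hsd : SymmDiffCond B)
    (mv : Ω → Ω → Equiv.Perm Ω) (hmv : IsElemMoveFn B mv) :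
    (elemMoves mv).ncard * (2 * (lam + 1)) = n * (n - 1) := by
  set f : Ω × Ω → Perm Ω := fun q => mv q.1 q.2
  set P : Finset (Ω × Ω) := (univ : Finset Ω).offDiag
  have hE : elemMoves mv = (P.image f : Set (Perm Ω)) := by
    ext g
    simp [elemMoves, f, P, eq_comm]
  have hfiber : ∀ g ∈ P.image f, #{q ∈ P | f q = g} = 2 * (lam + 1) := by
    simp only [P, mem_image, mem_offDiag, mem_univ, true_and]
    rintro _ ⟨⟨a, b⟩, hab, rfl⟩
    rw [hmv.filter_offDiag_eq_partnerPairs hD.2.1 hss hsd hab,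
      card_partnerPairs hD.2.1 hss hD.2.2 hab]
  calc (elemMoves mv).ncard * (2 * (lam + 1))
      = ∑ g ∈ P.image f, #{q ∈ P | f q = g} := by
        rw [hE, Set.ncard_coe_finset, sum_const_nat hfiber]
    _ = #P := (card_eq_sum_card_image f P).symm
    _ = n * (n - 1) := by rw [offDiag_card, card_univ, hD.1, Nat.mul_sub_one]

/-- Lemma 5.4: under Hypotheses 4.1 with `n > 2λ+2`, the number of
distinct elementary moves is `|E| = n(n-1)/(2(λ+1))`. -/
theorem elemMoves_count [Fintype Ω] [DecidableEq Ω]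
    {B : Set (Finset Ω)} {n lam : ℕ}
    (hD : IsDesign B n lam) (hss : Supersimple B) (hsd : SymmDiffCond B)
    (hRT : IsRegularTwoGraph (collinearTriples B)) (hn : 2 * lam + 2 < n)
    (mv : Ω → Ω → Equiv.Perm Ω) (hmv : IsElemMoveFn B mv) :
    (elemMoves mv).ncard * (2 * (lam + 1)) = n * (n - 1) :=
  elemMoves_count_general hD hss hsd mv hmv
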